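/- arXiv:1611.04104 — 2 statements merged into one kernel-verified Lean document; each statement's English description precedes it below -/
import Mathlib

section
/- (Efficiency of localized residuals.) Under the assumptions above, if for each patch $\omega_a$ there holds the stability bound $\|\nabla(\psi_a v)\|_{L_2(\omega_a)} \le C \|\nabla v\|_{L_2(\omega_a)}$ for all $v \in H^1_*(\omega_a)$, then $\|r_a\|_{H^1_*(\omega_a)'} \le C \|\nabla(u - u_\tau)\|_{L_2(\omega_a)}$ for every $a$. -/
open scoped InnerProductSpace

/-- efficiency of localized residuals. `X` models `H¹_*(ω_a)` with the
norm `‖∇·‖_{ω_a}`, `W` models the space `L₂(ω_a)²` of gradient fields, `g ∈ W` is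
`∇(u - u_τ)|_{ω_a}`, and `M : X → W` is the map `v ↦ ∇(ψ_a v)` (the zero extension of
`ψ_a v` lying in `H¹₀(Ω)` and `u` solving `-Δu = f` give
`r_a(v) = ∫ fψ_a v - ∫∇u_τ·∇(ψ_a v) = ⟨∇(u-u_τ), ∇(ψ_a v)⟩_{ω_a}`), assumed to
satisfy the stability bound `‖∇(ψ_a v)‖_{ω_a} ≤ C‖∇v‖_{ω_a}`. Then
`‖r_a‖_{H¹_*(ω_a)'} ≤ C ‖∇(u-u_τ)‖_{ω_a}`. -/
theorem localized_residual_efficiency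
    {X : Type*} [NormedAddCommGroup X] [NormedSpace ℝ X]
    {W : Type*} [NormedAddCommGroup W] [InnerProductSpace ℝ W]
    (C : ℝ) (hC : 0 ≤ C)
    (M : X →ₗ[ℝ] W)
    (hstab : ∀ v : X, ‖M v‖ ≤ C * ‖v‖)
    (g : W) (ρ : X →L[ℝ] ℝ)
    (hρ : ∀ v : X, ρ v = ⟪g, M v⟫_ℝ) :
    ‖ρ‖ ≤ C * ‖g‖ := by
  refine ρ.opNorm_le_bound (by positivity) fun v => ?_
  rw [hρ]
  calc ‖⟪g, M v⟫_ℝ‖ ≤ ‖g‖ * ‖M v‖ := norm_inner_le_norm g (M v)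
    _ ≤ ‖g‖ * (C * ‖v‖) := by
        exact mul_le_mul_of_nonneg_left (hstab v) (norm_nonneg g)
    _ = C * ‖g‖ * ‖v‖ := by ring
end

section
/- (Abstract contraction of hp-AFEM.) Let $H$ be a Hilbert space, $u \in H$, and $U \subseteq \bar{U}$ closed subspaces with orthogonal projections $u_\tau$ of $u$ onto $U$ and $\bar{u}$ of $u$ onto $\bar{U}$. Let $(a_i)_{i \in I}$ and $(b_i)_{i \in I}$ be finite families of nonnegative reals (representing $\|r_a\|$ and $\|\breve r_a\|$), and $(\bar a_i), (\bar b_i)$ nonnegative reals (the dual norms restricted to $\bar U$) with $\bar b_i \le b_i$ and $\bar a_i \le a_i$. Assume constants $C_1, C_2, \theta, \sigma > 0$, $\lambda \in (0, \sigma\theta/C_2)$, a set $M \subseteq I$, and: (1) $\|u - u_\tau\|^2 \le 3\sum_i a_i^2$ and $\sqrt{\sum_i \bar a_i^2} \le \sqrt{3} C_1 \|\bar u - u_\tau\|$; (2) $\big|\sqrt{\sum_i b_i^2} - \sqrt{\sum_i a_i^2}\big| \le C_2\,\mathrm{osc}$ and $\big|\sqrt{\sum_i \bar b_i^2} - \sqrt{\sum_i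 \bar a_i^2}\big| \le C_2\,\mathrm{osc}$ with $\mathrm{osc} \le \lambda \sqrt{\sum_i b_i^2}$; (3) $\sum_{i \in M} b_i^2 \ge \theta^2 \sum_i b_i^2$; (4) $\bar b_i \ge \sigma b_i$ for $i \in M$. Then $\|u - \bar u\| \le \sqrt{1 - \frac{(\sigma\theta - C_2\lambda)^2}{(3C_1(1+C_2\lambda))^2}}\,\|u - u_\tau\|$. -/
open scoped InnerProductSpace

/-- abstract contraction of hp-AFEM. -/
theorem hpAFEM_contraction
    {H : Type*} [NormedAddCommGroup H] [InnerProductSpace ℝ H]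
    (U Ubar : Submodule ℝ H) (hUU : U ≤ Ubar)
    (u uτ ubar : H)
    (huτ_mem : uτ ∈ U) (hubar_mem : ubar ∈ Ubar)
    (huτ_orth : ∀ v ∈ U, ⟪u - uτ, v⟫_ℝ = 0)
    (hubar_orth : ∀ v ∈ Ubar, ⟪u - ubar, v⟫_ℝ = 0)
    {ι : Type*} (I : Finset ι) (M : Finset ι) (hM : M ⊆ I)
    (a b abar bbar : ι → ℝ)
    (ha : ∀ i ∈ I, 0 ≤ a i) (hb : ∀ i ∈ I, 0 ≤ b i)
    (habar : ∀ i ∈ I, 0 ≤ abar i) (hbbar : ∀ i ∈ I, 0 ≤ bbar i)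
    (hbbar_le : ∀ i ∈ I, bbar i ≤ b i) (habar_le : ∀ i ∈ I, abar i ≤ a i)
    (C₁ C₂ θ σ lam osc : ℝ)
    (hC₁ : 0 < C₁) (hC₂ : 0 < C₂) (hθ : 0 < θ) (hσ : 0 < σ)
    (hlam0 : 0 < lam) (hlam1 : lam < σ * θ / C₂) (hosc : 0 ≤ osc)
    -- (1) reliability and discrete efficiency
    (hrel : ‖u - uτ‖ ^ 2 ≤ 3 * ∑ i ∈ I, (a i) ^ 2)
    (heff : Real.sqrt (∑ i ∈ I, (abar i) ^ 2) ≤ Real.sqrt 3 * C₁ * ‖ubar - uτ‖)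
    -- (2) oscillation comparisons and smallness
    (hosc1 : |Real.sqrt (∑ i ∈ I, (b i) ^ 2) - Real.sqrt (∑ i ∈ I, (a i) ^ 2)|
        ≤ C₂ * osc)
    (hosc2 : |Real.sqrt (∑ i ∈ I, (bbar i) ^ 2) - Real.sqrt (∑ i ∈ I, (abar i) ^ 2)|
        ≤ C₂ * osc)
    (hosc_small : osc ≤ lam * Real.sqrt (∑ i ∈ I, (b i) ^ 2))
    -- (3) Dörfler marking
    (hmark : θ ^ 2 * ∑ i ∈ I, (b i) ^ 2 ≤ ∑ i ∈ M, (b i) ^ 2)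
    -- (4) local saturation on marked indices
    (hsat : ∀ i ∈ M, σ * b i ≤ bbar i) :
    ‖u - ubar‖ ≤
      Real.sqrt (1 - (σ * θ - C₂ * lam) ^ 2 / (3 * C₁ * (1 + C₂ * lam)) ^ 2)
        * ‖u - uτ‖ := by
  set A := Real.sqrt (∑ i ∈ I, (a i) ^ 2) with hA
  set B := Real.sqrt (∑ i ∈ I, (b i) ^ 2) with hB
  set Abar := Real.sqrt (∑ i ∈ I, (abar i) ^ 2) with hAbar
  set Bbar := Real.sqrt (∑ i ∈ I, (bbar i) ^ 2) with hBbar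
  have hSa : (0:ℝ) ≤ ∑ i ∈ I, (a i) ^ 2 := Finset.sum_nonneg fun i _ => sq_nonneg _
  have hSb : (0:ℝ) ≤ ∑ i ∈ I, (b i) ^ 2 := Finset.sum_nonneg fun i _ => sq_nonneg _
  have hA0 : 0 ≤ A := Real.sqrt_nonneg _
  have hB0 : 0 ≤ B := Real.sqrt_nonneg _
  have hA2 : A ^ 2 = ∑ i ∈ I, (a i) ^ 2 := Real.sq_sqrt hSa
  have hc : 0 < σ * θ - C₂ * lam := by
    have h := (lt_div_iff₀ hC₂).mp hlam1
    linarith only [h]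
  -- Pythagoras
  have hortho : ⟪u - ubar, ubar - uτ⟫_ℝ = 0 :=
    hubar_orth _ (Ubar.sub_mem hubar_mem (hUU huτ_mem))
  have hpyth : ‖u - uτ‖ ^ 2 = ‖u - ubar‖ ^ 2 + ‖ubar - uτ‖ ^ 2 := by
    have hdecomp : u - uτ = (u - ubar) + (ubar - uτ) := by abel
    rw [hdecomp, norm_add_sq_real, hortho]; ring
  -- saturation + marking : σ²θ² ∑ b² ≤ ∑ bbar²
  have h1 : σ ^ 2 * θ ^ 2 * ∑ i ∈ I, (b i) ^ 2 ≤ ∑ i ∈ I, (bbar i) ^ 2 := by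
    have hs1 : ∑ i ∈ M, σ ^ 2 * (b i) ^ 2 ≤ ∑ i ∈ M, (bbar i) ^ 2 :=
      Finset.sum_le_sum fun i hi => by
        have h := hsat i hi
        have hb0 : 0 ≤ σ * b i := mul_nonneg hσ.le (hb i (hM hi))
        have h2 := pow_le_pow_left₀ hb0 h 2
        calc σ ^ 2 * (b i) ^ 2 = (σ * b i) ^ 2 := by ring
          _ ≤ (bbar i) ^ 2 := h2
    have hs2 : ∑ i ∈ M, (bbar i) ^ 2 ≤ ∑ i ∈ I, (bbar i) ^ 2 :=
      Finset.sum_le_sum_of_subset_of_nonneg hM fun i _ _ => sq_nonneg _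
    calc σ ^ 2 * θ ^ 2 * ∑ i ∈ I, (b i) ^ 2
        = σ ^ 2 * (θ ^ 2 * ∑ i ∈ I, (b i) ^ 2) := by ring
      _ ≤ σ ^ 2 * ∑ i ∈ M, (b i) ^ 2 := mul_le_mul_of_nonneg_left hmark (sq_nonneg σ)
      _ = ∑ i ∈ M, σ ^ 2 * (b i) ^ 2 := Finset.mul_sum _ _ _
      _ ≤ ∑ i ∈ M, (bbar i) ^ 2 := hs1
      _ ≤ ∑ i ∈ I, (bbar i) ^ 2 := hs2
  -- hence σθB ≤ Bbar
  have h2 : σ * θ * B ≤ Bbar := by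
    have h2' : Real.sqrt ((σ * θ) ^ 2 * ∑ i ∈ I, (b i) ^ 2) ≤ Bbar := by
      apply Real.sqrt_le_sqrt
      calc (σ * θ) ^ 2 * ∑ i ∈ I, (b i) ^ 2
          = σ ^ 2 * θ ^ 2 * ∑ i ∈ I, (b i) ^ 2 := by ring
        _ ≤ ∑ i ∈ I, (bbar i) ^ 2 := h1
    rwa [Real.sqrt_mul (sq_nonneg _), Real.sqrt_sq (by positivity)] at h2'
  have hco : C₂ * osc ≤ C₂ * (lam * B) := mul_le_mul_of_nonneg_left hosc_small hC₂.le
  -- lower bound for Abar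
  have h3 : (σ * θ - C₂ * lam) * B ≤ Abar := by
    have h := abs_le.mp hosc2
    linarith only [h.2, h2, hco]
  -- upper bound for A
  have h4 : A ≤ (1 + C₂ * lam) * B := by
    have h := abs_le.mp hosc1
    linarith only [h.1, hco]
  -- reliability in terms of B
  have h5 : ‖u - uτ‖ ^ 2 ≤ 3 * (1 + C₂ * lam) ^ 2 * B ^ 2 := by
    have hsq := pow_le_pow_left₀ hA0 h4 2
    have hrel' : ‖u - uτ‖ ^ 2 ≤ 3 * A ^ 2 := by rw [hA2]; exact hrel
    have hexp : ((1 + C₂ * lam) * B) ^ 2 = (1 + C₂ * lam) ^ 2 * B ^ 2 := by ring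
    linarith only [hsq, hrel', hexp.le, hexp.ge]
  -- efficiency in terms of B
  have h6 : (σ * θ - C₂ * lam) ^ 2 * B ^ 2 ≤ 3 * C₁ ^ 2 * ‖ubar - uτ‖ ^ 2 := by
    have hs3 : Real.sqrt 3 ^ 2 = 3 := Real.sq_sqrt (by norm_num)
    have hcb : 0 ≤ (σ * θ - C₂ * lam) * B := mul_nonneg hc.le hB0
    have heff' : (σ * θ - C₂ * lam) * B ≤ Real.sqrt 3 * C₁ * ‖ubar - uτ‖ :=
      le_trans h3 heff
    calc (σ * θ - C₂ * lam) ^ 2 * B ^ 2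
        = ((σ * θ - C₂ * lam) * B) ^ 2 := by ring
      _ ≤ (Real.sqrt 3 * C₁ * ‖ubar - uτ‖) ^ 2 := pow_le_pow_left₀ hcb heff' 2
      _ = Real.sqrt 3 ^ 2 * (C₁ ^ 2 * ‖ubar - uτ‖ ^ 2) := by ring
      _ = 3 * C₁ ^ 2 * ‖ubar - uτ‖ ^ 2 := by rw [hs3]; ring
  -- key inequality
  have hD : (0:ℝ) < (3 * C₁ * (1 + C₂ * lam)) ^ 2 := by positivity
  have key : (σ * θ - C₂ * lam) ^ 2 / (3 * C₁ * (1 + C₂ * lam)) ^ 2 * ‖u - uτ‖ ^ 2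
      ≤ ‖ubar - uτ‖ ^ 2 := by
    rw [div_mul_eq_mul_div, div_le_iff₀ hD]
    have k1 : (σ * θ - C₂ * lam) ^ 2 * ‖u - uτ‖ ^ 2
        ≤ (σ * θ - C₂ * lam) ^ 2 * (3 * (1 + C₂ * lam) ^ 2 * B ^ 2) :=
      mul_le_mul_of_nonneg_left h5 (sq_nonneg _)
    have k2 : 3 * (1 + C₂ * lam) ^ 2 * ((σ * θ - C₂ * lam) ^ 2 * B ^ 2)
        ≤ 3 * (1 + C₂ * lam) ^ 2 * (3 * C₁ ^ 2 * ‖ubar - uτ‖ ^ 2) :=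
      mul_le_mul_of_nonneg_left h6 (by positivity)
    linarith only [k1, k2]
  have hE2 : ‖u - ubar‖ ^ 2 ≤
      (1 - (σ * θ - C₂ * lam) ^ 2 / (3 * C₁ * (1 + C₂ * lam)) ^ 2) * ‖u - uτ‖ ^ 2 := by
    have hx : (1 - (σ * θ - C₂ * lam) ^ 2 / (3 * C₁ * (1 + C₂ * lam)) ^ 2) * ‖u - uτ‖ ^ 2
        = ‖u - uτ‖ ^ 2 - (σ * θ - C₂ * lam) ^ 2 / (3 * C₁ * (1 + C₂ * lam)) ^ 2 * ‖u - uτ‖ ^ 2 := by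
      ring
    rw [hx]
    linarith only [key, hpyth]
  rcases eq_or_lt_of_le (norm_nonneg (u - uτ)) with h0 | h0
  · have hN : ‖u - uτ‖ = 0 := h0.symm
    have hN2 : ‖u - uτ‖ ^ 2 = 0 := by rw [hN]; ring
    have hE0 : ‖u - ubar‖ ^ 2 ≤ 0 := by
      rw [hN2] at hpyth
      linarith only [hpyth, sq_nonneg ‖ubar - uτ‖]
    have hE : ‖u - ubar‖ = 0 :=
      pow_eq_zero_iff (n := 2) (by norm_num) |>.mp
        (le_antisymm hE0 (sq_nonneg _))
    rw [hE, hN, mul_zero]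
  · have hμ : 0 ≤ 1 - (σ * θ - C₂ * lam) ^ 2 / (3 * C₁ * (1 + C₂ * lam)) ^ 2 := by
      by_contra hneg
      push_neg at hneg
      have hN2 : 0 < ‖u - uτ‖ ^ 2 := by positivity
      have : (1 - (σ * θ - C₂ * lam) ^ 2 / (3 * C₁ * (1 + C₂ * lam)) ^ 2) * ‖u - uτ‖ ^ 2
          < 0 := mul_neg_of_neg_of_pos hneg hN2
      linarith only [this, hE2, sq_nonneg ‖u - ubar‖]
    calc ‖u - ubar‖ = Real.sqrt (‖u - ubar‖ ^ 2) := (Real.sqrt_sq (norm_nonneg _)).symm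
      _ ≤ Real.sqrt ((1 - (σ * θ - C₂ * lam) ^ 2 / (3 * C₁ * (1 + C₂ * lam)) ^ 2)
            * ‖u - uτ‖ ^ 2) := Real.sqrt_le_sqrt hE2
      _ = Real.sqrt (1 - (σ * θ - C₂ * lam) ^ 2 / (3 * C₁ * (1 + C₂ * lam)) ^ 2)
            * ‖u - uτ‖ := by
          rw [Real.sqrt_mul hμ, Real.sqrt_sq (norm_nonneg _)]
end
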